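/- arXiv:hep-th/0312049 — 2 statements merged into one kernel-verified Lean document; each statement's English description precedes it below -/
import Mathlib

section
/- Let G be a group and consider tuples (A, B, x₁, …, x_k) ∈ G^(2+k). Set δ(A,B) = A⁻¹ B⁻¹ A. For g ∈ G define ρ(g) : (A, B, x₁, …, x_k) ↦ ([g,δ] A g⁻¹, [g,δ] B [g,δ]⁻¹, [g,δ] x₁ [g,δ]⁻¹, …, [g,δ] x_k [g,δ]⁻¹), where δ = δ(A,B) and [g,δ] = g δ g⁻¹ δ⁻¹. Then ρ is a left action of G on G^(2+k), and the word δ is equivariant under conjugation: δ applied to the first two components of ρ(g)(A,B,x) equals g · δ(A,B) · g⁻¹. -/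
/-!
Write `δ = A⁻¹B⁻¹A` and `c = [g, δ]`. Replacing `(A, B)` by `(cAg⁻¹, cBc⁻¹)` conjugates `δ` by `g`,
since the inner factors `c⁻¹c` cancel. The action law then reduces to the cocycle identity
`[g₁, g₂δg₂⁻¹] [g₂, δ] = [g₁g₂, δ]`.
-/

/-- The group commutator `[x,y] = x y x⁻¹ y⁻¹`. -/
def gcomm {G : Type*} [Group G] (x y : G) : G := x * y * x⁻¹ * y⁻¹

section CurveDelta

variable {G ι : Type*} [Group G]

def deltaWord (A B : G) : G := A⁻¹ * B⁻¹ * A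

lemma gcomm_one_left (d : G) : gcomm 1 d = 1 := by
  simp [gcomm]

lemma gcomm_conj_mul_gcomm (g₁ g₂ d : G) :
    gcomm g₁ (g₂ * d * g₂⁻¹) * gcomm g₂ d = gcomm (g₁ * g₂) d := by
  simp only [gcomm]
  group

lemma deltaWord_conj_pair (c h A B : G) :
    deltaWord (c * A * h⁻¹) (c * B * c⁻¹) = h * deltaWord A B * h⁻¹ := by
  simp only [deltaWord]
  group

def deltaAct (g : G) (p : G × G × (ι → G)) : G × G × (ι → G) :=
  (gcomm g (deltaWord p.1 p.2.1) * p.1 * g⁻¹,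
   gcomm g (deltaWord p.1 p.2.1) * p.2.1 * (gcomm g (deltaWord p.1 p.2.1))⁻¹,
   fun l => gcomm g (deltaWord p.1 p.2.1) * p.2.2 l * (gcomm g (deltaWord p.1 p.2.1))⁻¹)

lemma deltaWord_deltaAct (g : G) (p : G × G × (ι → G)) :
    deltaWord (deltaAct g p).1 (deltaAct g p).2.1 = g * deltaWord p.1 p.2.1 * g⁻¹ :=
  deltaWord_conj_pair _ _ _ _

lemma deltaAct_one (p : G × G × (ι → G)) : deltaAct 1 p = p := by
  simp [deltaAct, gcomm_one_left]

lemma deltaAct_mul (g₁ g₂ : G) (p : G × G × (ι → G)) :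
    deltaAct (g₁ * g₂) p = deltaAct g₁ (deltaAct g₂ p) := by
  have hδ := deltaWord_deltaAct g₂ p
  have hc := gcomm_conj_mul_gcomm g₁ g₂ (deltaWord p.1 p.2.1)
  obtain ⟨A, B, x⟩ := p
  simp only [deltaAct] at hδ hc ⊢
  rw [hδ, ← hc]
  refine Prod.ext ?_ (Prod.ext ?_ (funext fun l => ?_)) <;> group

end CurveDelta

/-- With `δ = δ(A,B) = A⁻¹B⁻¹A`, the map
`ρ(g) : (A, B, x₁, …, x_k) ↦ ([g,δ] A g⁻¹, [g,δ] B [g,δ]⁻¹, [g,δ] xⱼ [g,δ]⁻¹)`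
is a left action of `G` on `G^(2+k)`, and `δ` is equivariant under conjugation. -/
theorem action_for_curve_delta {G : Type*} [Group G] {k : ℕ}
    (δ : G → G → G) (hδ : ∀ A B, δ A B = A⁻¹ * B⁻¹ * A)
    (ρ : G → (G × G × (Fin k → G)) → (G × G × (Fin k → G)))
    (hρ : ∀ (g A B : G) (x : Fin k → G),
      ρ g (A, B, x) =
        (gcomm g (δ A B) * A * g⁻¹,
         gcomm g (δ A B) * B * (gcomm g (δ A B))⁻¹,
         fun l => gcomm g (δ A B) * x l * (gcomm g (δ A B))⁻¹)) :
    (∀ p, ρ 1 p = p) ∧ (∀ g₁ g₂ p, ρ (g₁ * g₂) p = ρ g₁ (ρ g₂ p)) ∧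
    (∀ (g A B : G) (x : Fin k → G),
      δ (ρ g (A, B, x)).1 (ρ g (A, B, x)).2.1 = g * δ A B * g⁻¹) := by
  obtain rfl : δ = deltaWord := funext fun A => funext fun B => hδ A B
  obtain rfl : ρ = deltaAct := funext fun g => funext fun ⟨A, B, x⟩ => hρ g A B x
  exact ⟨deltaAct_one, deltaAct_mul, fun g A B x => deltaWord_deltaAct g (A, B, x)⟩
end

section
/- Let G be a group, fix g₁, …, g_n ∈ G, and for a tuple (v₁, …, v_n, A₁, B₁, …, A_g, B_g) ∈ G^(n+2g) set u_ν = v_ν g_ν v_ν⁻¹. Fix 1 ≤ ν ≤ n and 1 ≤ i ≤ g, and set u_κ = A_i⁻¹ B_i⁻¹ A_i u_ν. For g ∈ G define ρ(g) : v_ν ↦ g v_ν; v_τ ↦ [g, u_ν] v_τ for τ > ν; v_τ unchanged for τ < ν; A_j ↦ [g,u_ν] A_j [g,u_ν]⁻¹ and B_j ↦ [g,u_ν] B_j [g,u_ν]⁻¹ for j < i; A_i ↦ [g, u_κ] A_i g⁻¹; B_i ↦ [g, u_κ] B_i [g, u_κ]⁻¹; and A_j ↦ [g, u_κ] A_j [g,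 u_κ]⁻¹, B_j ↦ [g, u_κ] B_j [g, u_κ]⁻¹ for j > i, where u_ν, u_κ are computed from the argument tuple and [x,y] = x y x⁻¹ y⁻¹. Then ρ is a left action of G on G^(n+2g), and u_κ is conjugation-equivariant: u_κ evaluated on ρ(g) of a tuple equals g · u_κ · g⁻¹ evaluated on that tuple. -/
theorem gcomm_one_left_s12 {G : Type*} [Group G] (x : G) : gcomm 1 x = 1 := by
  simp [gcomm]

theorem gcomm_mul_left {G : Type*} [Group G] (g₁ g₂ x : G) :
    gcomm (g₁ * g₂) x = gcomm g₁ (g₂ * x * g₂⁻¹) * gcomm g₂ x := by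
  simp only [gcomm]
  group

section LiftedAction

variable {G : Type*} [Group G] {n m : ℕ}

def liftedAction (uν : (Fin n → G) → G) (uκ : (Fin n → G) × (Fin m → G) × (Fin m → G) → G)
    (ν : Fin n) (i : Fin m) (g : G) (q : (Fin n → G) × (Fin m → G) × (Fin m → G)) :
    (Fin n → G) × (Fin m → G) × (Fin m → G) :=
  let c := gcomm g (uν q.1)
  let d := gcomm g (uκ q)
  (fun τ => if τ = ν then g * q.1 τ else if ν < τ then c * q.1 τ else q.1 τ,
   fun j => if j < i then c * q.2.1 j * c⁻¹ else if j = i then d * q.2.1 j * g⁻¹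
     else d * q.2.1 j * d⁻¹,
   fun j => if j < i then c * q.2.2 j * c⁻¹ else d * q.2.2 j * d⁻¹)

variable {uν : (Fin n → G) → G} {uκ : (Fin n → G) × (Fin m → G) × (Fin m → G) → G}
  {ν : Fin n} {i : Fin m}

theorem liftedAction_fst_self (g : G) (q : (Fin n → G) × (Fin m → G) × (Fin m → G)) :
    (liftedAction uν uκ ν i g q).1 ν = g * q.1 ν := by
  simp [liftedAction]

theorem liftedAction_one (q : (Fin n → G) × (Fin m → G) × (Fin m → G)) :
    liftedAction uν uκ ν i 1 q = q := by
  ext <;> simp [liftedAction, gcomm_one_left_s12]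

theorem liftedAction_kappa_equivariant
    (hκ : ∀ q, uκ q = (q.2.1 i)⁻¹ * (q.2.2 i)⁻¹ * q.2.1 i * uν q.1)
    (hν : ∀ g q, uν (liftedAction uν uκ ν i g q).1 = g * uν q.1 * g⁻¹)
    (g : G) (q : (Fin n → G) × (Fin m → G) × (Fin m → G)) :
    uκ (liftedAction uν uκ ν i g q) = g * uκ q * g⁻¹ := by
  rw [hκ, hκ q, hν]
  simp only [liftedAction, lt_irrefl, if_false, if_true]
  group

theorem liftedAction_mul (hν : ∀ g q, uν (liftedAction uν uκ ν i g q).1 = g * uν q.1 * g⁻¹)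
    (hκ : ∀ g q, uκ (liftedAction uν uκ ν i g q) = g * uκ q * g⁻¹)
    (g₁ g₂ : G) (q : (Fin n → G) × (Fin m → G) × (Fin m → G)) :
    liftedAction uν uκ ν i (g₁ * g₂) q =
      liftedAction uν uκ ν i g₁ (liftedAction uν uκ ν i g₂ q) := by
  have hν₂ := hν g₂ q
  have hκ₂ := hκ g₂ q
  simp only [liftedAction] at hν₂ hκ₂ ⊢
  rw [hν₂, hκ₂]
  ext <;> simp only [gcomm_mul_left] <;> split_ifs <;> group

end LiftedAction

/-- The lifted `G`-action associated to the curve `κ_{ν,n+2i−1} = a_i⁻¹ b_i⁻¹ a_i m_ν`: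
with `u_τ = v_τ g_τ v_τ⁻¹` and `u_κ = A_i⁻¹ B_i⁻¹ A_i u_ν`, the map `ρ(g)` sending
`v_ν ↦ g v_ν`, `v_τ ↦ [g,u_ν] v_τ` for `τ > ν`, fixing `v_τ` for `τ < ν`, conjugating
`A_j, B_j` by `[g,u_ν]` for `j < i`, sending `A_i ↦ [g,u_κ] A_i g⁻¹`,
`B_i ↦ [g,u_κ] B_i [g,u_κ]⁻¹`, and conjugating `A_j, B_j` by `[g,u_κ]` for `j > i`,
is a left action of `G` on `G^(n+2g)`, and `u_κ` is conjugation-equivariant. -/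
theorem lifted_action_for_curve_kappa_nu_delta {G : Type*} [Group G] {n m : ℕ}
    (gg : Fin n → G) (ν : Fin n) (i : Fin m)
    (u : (Fin n → G) → Fin n → G)
    (hu : ∀ v τ, u v τ = v τ * gg τ * (v τ)⁻¹)
    (uκ : ((Fin n → G) × (Fin m → G) × (Fin m → G)) → G)
    (huκ : ∀ (v : Fin n → G) (A B : Fin m → G),
      uκ (v, A, B) = (A i)⁻¹ * (B i)⁻¹ * A i * u v ν)
    (ρ : G → ((Fin n → G) × (Fin m → G) × (Fin m → G)) →
          ((Fin n → G) × (Fin m → G) × (Fin m → G)))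
    (hρ : ∀ (g : G) (v : Fin n → G) (A B : Fin m → G),
      ρ g (v, A, B) =
        (fun τ =>
          if τ = ν then g * v τ
          else if ν < τ then gcomm g (u v ν) * v τ
          else v τ,
         fun j =>
          if j < i then gcomm g (u v ν) * A j * (gcomm g (u v ν))⁻¹
          else if j = i then gcomm g (uκ (v, A, B)) * A j * g⁻¹
          else gcomm g (uκ (v, A, B)) * A j * (gcomm g (uκ (v, A, B)))⁻¹,
         fun j =>
          if j < i then gcomm g (u v ν) * B j * (gcomm g (u v ν))⁻¹
          else gcomm g (uκ (v, A, B)) * B j * (gcomm g (uκ (v, A, B)))⁻¹)) :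
    (∀ q, ρ 1 q = q) ∧ (∀ g₁ g₂ q, ρ (g₁ * g₂) q = ρ g₁ (ρ g₂ q)) ∧
    (∀ (g : G) (q : (Fin n → G) × (Fin m → G) × (Fin m → G)),
      uκ (ρ g q) = g * uκ q * g⁻¹) := by
  obtain rfl : ρ = liftedAction (u · ν) uκ ν i :=
    funext fun g => funext fun ⟨v, A, B⟩ => hρ g v A B
  have hν : ∀ g q, u (liftedAction (u · ν) uκ ν i g q).1 ν = g * u q.1 ν * g⁻¹ := by
    intro g q
    rw [hu, hu, liftedAction_fst_self]
    group
  have hκ := liftedAction_kappa_equivariant (uν := (u · ν)) (fun ⟨v, A, B⟩ => huκ v A B) hν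
  exact ⟨liftedAction_one, liftedAction_mul hν hκ, hκ⟩
end
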